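/- arXiv:1310.3574 — 2 statements merged into one kernel-verified Lean document; each statement's English description precedes it below -/
import Mathlib

section
/- A balanced (t-1)-spread of PG(n-1,2) exists if and only if t divides n. -/
/-- The vector space `GF(2)^n`. -/
abbrev V (n : ℕ) := Fin n → ZMod 2

/-- A `(t-1)`-flat of `PG(n-1,2)`: the set of nonzero points of a
`t`-dimensional `GF(2)`-subspace of `GF(2)^n`. -/
def IsFlat (n t : ℕ) (f : Set (V n)) : Prop :=
  ∃ S : Submodule (ZMod 2) (V n),
    Module.finrank (ZMod 2) S = t ∧ f = (S : Set (V n)) \ {0}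

/-- A balanced `(t-1)`-spread of `PG(n-1,2)`: a collection of `(t-1)`-flats
whose underlying point sets partition the nonzero vectors of `GF(2)^n`. -/
def IsSpread (n t : ℕ) (ψ : Set (Set (V n))) : Prop :=
  (∀ f ∈ ψ, IsFlat n t f) ∧ ψ.PairwiseDisjoint id ∧
    ⋃₀ ψ = {v : V n | v ≠ 0}

/-
Each `(t-1)`-flat has `2^t - 1` points, so a spread of the `2^n - 1` nonzero vectors forces
`2^t - 1 ∣ 2^n - 1`, and since `gcd (2^a - 1) (2^b - 1) = 2^(gcd a b) - 1` this means `t ∣ n`.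
Conversely, if `n = t * m` then `GF(2)^n ≅ GF(2^t)^m` as `GF(2)`-spaces; the one-dimensional
`GF(2^t)`-subspaces are `t`-dimensional over `GF(2)` and any two of them meet only in `0`.
-/

open Module

theorem Nat.pow_sub_one_dvd_pow_sub_one_iff {a m n : ℕ} (ha : 2 ≤ a) :
    a ^ m - 1 ∣ a ^ n - 1 ↔ m ∣ n := by
  have one_le_pow (k : ℕ) : 1 ≤ a ^ k := Nat.one_le_pow k a (by omega)
  rw [← Nat.gcd_eq_left_iff_dvd, ← Nat.gcd_eq_left_iff_dvd, Nat.pow_sub_one_gcd_pow_sub_one,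
    tsub_left_inj (one_le_pow _) (one_le_pow _), (Nat.pow_right_injective ha).eq_iff]

theorem Set.dvd_ncard_sUnion {α : Type*} [Finite α] {ψ : Set (Set α)} {k : ℕ}
    (hψ : ψ.PairwiseDisjoint id) (hk : ∀ s ∈ ψ, k ∣ s.ncard) : k ∣ (⋃₀ ψ).ncard := by
  rw [Set.sUnion_eq_biUnion, (Set.toFinite ψ).ncard_biUnion (fun s _ ↦ Set.toFinite s) hψ]
  exact finsum_mem_induction _ (dvd_zero k) (fun _ _ ↦ dvd_add) hk

theorem Submodule.ncard_sdiff_zero {F M : Type*} [DivisionRing F] [AddCommGroup M] [Module F M]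
    [Module.Finite F M] (S : Submodule F M) :
    ((S : Set M) \ {0}).ncard = Nat.card F ^ finrank F S - 1 := by
  rw [Set.ncard_sdiff_singleton_of_mem S.zero_mem, ← Nat.card_coe_set_eq, SetLike.coe_sort_coe,
    Module.natCard_eq_pow_finrank (K := F)]

theorem IsFlat.ncard {n t : ℕ} {f : Set (V n)} (hf : IsFlat n t f) : f.ncard = 2 ^ t - 1 := by
  obtain ⟨S, rfl, rfl⟩ := hf
  rw [S.ncard_sdiff_zero, Nat.card_zmod]

theorem isFlat_nonzero (n : ℕ) : IsFlat n n {v : V n | v ≠ 0} :=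
  ⟨⊤, by rw [finrank_top, finrank_fin_fun], by ext; simp⟩

theorem IsSpread.pow_sub_one_dvd {n t : ℕ} {ψ : Set (Set (V n))} (h : IsSpread n t ψ) :
    2 ^ t - 1 ∣ 2 ^ n - 1 := by
  obtain ⟨hflat, hdisj, hcover⟩ := h
  have := Set.dvd_ncard_sUnion hdisj fun f hf ↦ by rw [(hflat f hf).ncard]
  rwa [hcover, (isFlat_nonzero n).ncard] at this

theorem isSpread_preimage {n t : ℕ} {W : Type*} [AddCommGroup W] [Module (ZMod 2) W]
    (e : V n ≃ₗ[ZMod 2] W) {ψ : Set (Set W)}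
    (hflat : ∀ f ∈ ψ, ∃ S : Submodule (ZMod 2) W, finrank (ZMod 2) S = t ∧ f = (S : Set W) \ {0})
    (hdisj : ψ.PairwiseDisjoint id) (hcover : ⋃₀ ψ = {w : W | w ≠ 0}) :
    IsSpread n t ((e ⁻¹' ·) '' ψ) := by
  refine ⟨?_, ?_, ?_⟩
  · rintro _ ⟨f, hf, rfl⟩
    obtain ⟨S, rfl, rfl⟩ := hflat f hf
    refine ⟨S.comap (e : V n →ₗ[ZMod 2] W), (e.ofSubmodule' S).finrank_eq, ?_⟩
    ext v
    simp
  · rw [((Set.preimage_injective.mpr e.surjective).injOn).pairwiseDisjoint_image]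
    exact fun a ha b hb hab ↦ (hdisj ha hb hab).preimage e
  · rw [Set.sUnion_image, ← Set.preimage_sUnion, hcover]
    ext v
    simp

section DesarguesianSpread

variable (K W : Type*) [DivisionRing K] [AddCommGroup W] [Module K W]

/-- Over a subfield `F` of `K`, these punctured `K`-lines form the Desarguesian spread of `W`. -/
def desarguesianSpread : Set (Set W) :=
  (fun w ↦ ((K ∙ w : Submodule K W) : Set W) \ {0}) '' {w | w ≠ 0}

variable {K W}

theorem Submodule.span_singleton_eq_of_mem {v w : W} (hv : v ≠ 0) (h : v ∈ K ∙ w) :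
    K ∙ v = K ∙ w := by
  obtain ⟨a, rfl⟩ := Submodule.mem_span_singleton.mp h
  exact Submodule.span_singleton_smul_eq (IsUnit.mk0 a (by rintro rfl; simp at hv)) w

theorem pairwiseDisjoint_desarguesianSpread : (desarguesianSpread K W).PairwiseDisjoint id := by
  rintro _ ⟨w, -, rfl⟩ _ ⟨w', -, rfl⟩ hne
  refine Set.disjoint_left.mpr fun v hv hv' ↦ hne ?_
  simp only at hv hv' ⊢
  rw [← Submodule.span_singleton_eq_of_mem hv.2 hv.1,
    ← Submodule.span_singleton_eq_of_mem hv'.2 hv'.1]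

theorem sUnion_desarguesianSpread : ⋃₀ desarguesianSpread K W = {w | w ≠ 0} := by
  refine subset_antisymm ?_ fun w hw ↦ ⟨_, ⟨w, hw, rfl⟩, Submodule.mem_span_singleton_self w, hw⟩
  rintro v ⟨_, ⟨w, -, rfl⟩, hv⟩
  exact hv.2

theorem finrank_restrictScalars_span_singleton {F : Type*} [Field F] [Algebra F K] [Module F W]
    [IsScalarTower F K W] {w : W} (hw : w ≠ 0) :
    finrank F ((K ∙ w).restrictScalars F) = finrank F K := by
  change finrank F (K ∙ w) = _
  rw [← finrank_mul_finrank F K, finrank_span_singleton hw, mul_one]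

end DesarguesianSpread

theorem exists_isSpread_of_dvd {n t : ℕ} (ht : t ≠ 0) (hdvd : t ∣ n) :
    ∃ ψ : Set (Set (V n)), IsSpread n t ψ := by
  obtain ⟨m, rfl⟩ := hdvd
  let K := GaloisField 2 t
  have hK : finrank (ZMod 2) K = t := GaloisField.finrank 2 ht
  obtain ⟨e⟩ : Nonempty (V (t * m) ≃ₗ[ZMod 2] (Fin m → K)) := by
    refine FiniteDimensional.nonempty_linearEquiv_of_finrank_eq ?_
    rw [finrank_fin_fun (ZMod 2), ← finrank_mul_finrank (ZMod 2) K (Fin m → K),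
      finrank_fin_fun K, hK]
  refine ⟨_, isSpread_preimage e ?_ (pairwiseDisjoint_desarguesianSpread (K := K))
    sUnion_desarguesianSpread⟩
  rintro _ ⟨w, hw, rfl⟩
  exact ⟨_, (finrank_restrictScalars_span_singleton hw).trans hK, rfl⟩

theorem spread_exists_iff_dvd_general (n t : ℕ) (ht : 1 ≤ t) :
    (∃ ψ : Set (Set (V n)), IsSpread n t ψ) ↔ t ∣ n :=
  ⟨fun ⟨_, h⟩ ↦ (Nat.pow_sub_one_dvd_pow_sub_one_iff le_rfl).mp h.pow_sub_one_dvd,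
    exists_isSpread_of_dvd (by omega)⟩

/-- André's theorem for q = 2: a balanced `(t-1)`-spread of `PG(n-1,2)`
exists if and only if `t` divides `n`. -/
theorem spread_exists_iff_dvd (n t : ℕ) (ht : 1 ≤ t) (htn : t ≤ n) :
    (∃ ψ : Set (Set (V n)), IsSpread n t ψ) ↔ t ∣ n :=
  spread_exists_iff_dvd_general n t ht
end

section
/- The existence of a balanced covering star St(n, μ, t, t0) of PG(n-1,2) is equivalent to the existence of a balanced (h-1)-spread of PG(u-1,2), where u = n - t0 and h = t - t0. Moreover, given a spread ψ = {f_1,...,f_μ} of PG(u-1,2) embedded in PG(n-1,2) and a (t0-1)-flat π disjoint from the span of the f_i, the sets f_i* = span(f_i, π) minus zero form such a covering star with nucleus π. -/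
/-- A balanced covering star `St(n, μ, t, t0)` of `PG(n-1,2)` with set of rays
`Ω` and nucleus `π`: `μ` distinct `(t-1)`-flats, each containing the
`(t0-1)`-flat `π`, pairwise intersecting exactly in `π`, and covering all
nonzero points of `GF(2)^n`. -/
def IsCoveringStar (n μ t t0 : ℕ) (Ω : Set (Set (V n))) (π : Set (V n)) : Prop :=
  Ω.ncard = μ ∧ IsFlat n t0 π ∧
    (∀ f ∈ Ω, IsFlat n t f ∧ π ⊆ f) ∧
    (∀ f ∈ Ω, ∀ g ∈ Ω, f ≠ g → f ∩ g = π) ∧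
    ⋃₀ Ω = {v : V n | v ≠ 0}

/-- The embedding of `GF(2)^u` into `GF(2)^n` via the first `u` coordinates. -/
def emb (u n : ℕ) : V u →ₗ[ZMod 2] V n where
  toFun v := fun j => if h : (j : ℕ) < u then v ⟨j, h⟩ else 0
  map_add' x y := by funext j; by_cases h : (j : ℕ) < u <;> simp [h]
  map_smul' c x := by funext j; by_cases h : (j : ℕ) < u <;> simp [h]

open Submodule

/-!
A flat is the set of nonzero vectors of a subspace, so a covering star with nucleus `π` is the
same as a family of subspaces that contain `P = span π`, pairwise meet in `P` and cover the
space, and a spread is such a family with `P = ⊥`. For a surjective linear map `L` with kernel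
`P`, images under `L` and preimages under `L` exchange these two kinds of families, moving
dimensions by `dim P`. Taking `L` to be the quotient by the nucleus turns a star into a spread.
Taking `L` to be the projection onto the embedded `GF(2)^u` along `span π`, the preimage of a
flat `f` is `span (f ∪ π)`, which gives the explicit star. Counting points, a spread of
`PG(u-1,2)` by `(h-1)`-flats has `(2^u - 1)/(2^h - 1)` members.
-/

open Submodule LinearMap Module

namespace Submodule

variable {R M : Type*} [Semiring R] [AddCommMonoid M] [Module R M]

def punctured (S : Submodule R M) : Set M := (S : Set M) \ {0}

lemma mem_punctured {S : Submodule R M} {x : M} : x ∈ S.punctured ↔ x ∈ S ∧ x ≠ 0 := Iff.rfl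

lemma span_punctured (S : Submodule R M) : span R S.punctured = S := by
  refine le_antisymm (span_le.2 fun x hx => hx.1) fun x hx => ?_
  rcases eq_or_ne x 0 with rfl | hx0
  · exact zero_mem _
  · exact subset_span ⟨hx, hx0⟩

lemma punctured_injective : Function.Injective (punctured : Submodule R M → Set M) :=
  fun S T h => by rw [← span_punctured S, h, span_punctured]

lemma pairwise_image_punctured {r : Set M → Set M → Prop} {𝒮 : Set (Submodule R M)} :
    (punctured '' 𝒮).Pairwise r ↔ 𝒮.Pairwise fun S T => r S.punctured T.punctured :=
  punctured_injective.injOn.pairwise_image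

lemma punctured_inter_punctured (S T : Submodule R M) :
    S.punctured ∩ T.punctured = (S ⊓ T).punctured := by
  ext x; simp only [Set.mem_inter_iff, mem_punctured, mem_inf]; tauto

lemma punctured_subset_punctured {S T : Submodule R M} :
    S.punctured ⊆ T.punctured ↔ S ≤ T := by
  rw [← Set.inter_eq_left, punctured_inter_punctured, punctured_injective.eq_iff, inf_eq_left]

lemma disjoint_punctured {S T : Submodule R M} :
    Disjoint S.punctured T.punctured ↔ S ⊓ T = ⊥ := by
  have : (⊥ : Submodule R M).punctured = ∅ := by ext; simp [mem_punctured]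
  rw [Set.disjoint_iff_inter_eq_empty, punctured_inter_punctured, ← this,
    punctured_injective.eq_iff]

lemma punctured_top : (⊤ : Submodule R M).punctured = {x | x ≠ 0} := by
  ext; simp [mem_punctured]

lemma sUnion_image_punctured {𝒮 : Set (Submodule R M)} :
    ⋃₀ (punctured '' 𝒮) = {x | x ≠ 0} ↔ ∀ x ≠ (0 : M), ∃ S ∈ 𝒮, x ∈ S := by
  simp only [Set.ext_iff, Set.sUnion_image, Set.mem_iUnion, mem_punctured, exists_prop,
    Set.mem_ofPred_eq]
  exact forall_congr' fun x => by grind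

lemma ncard_punctured {K V : Type*} [Field K] [AddCommGroup V] [Module K V]
    [FiniteDimensional K V] (S : Submodule K V) :
    S.punctured.ncard = Nat.card K ^ finrank K S - 1 := by
  rw [punctured, Set.ncard_sdiff_singleton_of_mem S.zero_mem, ← Nat.card_coe_set_eq,
    SetLike.coe_sort_coe, natCard_eq_pow_finrank (K := K)]

end Submodule

/-- Subspace form of a covering star with nucleus `P`; for `P = ⊥` it is a spread. -/
structure IsSubspaceStar {R M : Type*} [Semiring R] [AddCommMonoid M] [Module R M]
    (P : Submodule R M) (𝒮 : Set (Submodule R M)) : Prop where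
  nucleus_le : ∀ S ∈ 𝒮, P ≤ S
  pairwise_inf_eq : 𝒮.Pairwise fun S T => S ⊓ T = P
  exists_mem : ∀ x ≠ (0 : M), ∃ S ∈ 𝒮, x ∈ S

section Correspondence

variable {R M W : Type*} [Ring R] [AddCommGroup M] [Module R M] [AddCommGroup W] [Module R W]
  {L : M →ₗ[R] W}

lemma IsSubspaceStar.comap [Nontrivial W] {𝒮 : Set (Submodule R W)} (h : IsSubspaceStar ⊥ 𝒮)
    (hL : Function.Surjective L) : IsSubspaceStar (ker L) (comap L '' 𝒮) where
  nucleus_le := by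
    rintro _ ⟨S, -, rfl⟩
    exact comap_mono bot_le
  pairwise_inf_eq := by
    rw [(comap_injective_of_surjective hL).injOn.pairwise_image]
    intro S hS T hT hST
    simp only [Function.onFun, ← comap_inf, h.pairwise_inf_eq hS hT hST]
    rfl
  exists_mem x hx := by
    by_cases hLx : L x = 0
    · obtain ⟨y, hy⟩ := exists_ne (0 : W)
      obtain ⟨S, hS, -⟩ := h.exists_mem y hy
      exact ⟨_, ⟨S, hS, rfl⟩, mem_comap.2 (hLx ▸ S.zero_mem)⟩
    · obtain ⟨S, hS, hxS⟩ := h.exists_mem _ hLx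
      exact ⟨_, ⟨S, hS, rfl⟩, hxS⟩

lemma IsSubspaceStar.map {𝒮 : Set (Submodule R M)} (h : IsSubspaceStar (ker L) 𝒮)
    (hL : Function.Surjective L) : IsSubspaceStar ⊥ (map L '' 𝒮) where
  nucleus_le := by
    rintro _ ⟨S, -, rfl⟩
    exact bot_le
  pairwise_inf_eq := by
    rintro _ ⟨S, hS, rfl⟩ _ ⟨T, hT, rfl⟩ hST
    have hne : S ≠ T := by rintro rfl; exact hST rfl
    apply comap_injective_of_surjective hL
    rw [comap_inf, comap_map_eq_self (h.nucleus_le S hS), comap_map_eq_self (h.nucleus_le T hT),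
      h.pairwise_inf_eq hS hT hne]
    rfl
  exists_mem y hy := by
    obtain ⟨x, rfl⟩ := hL y
    obtain ⟨S, hS, hxS⟩ := h.exists_mem x (by rintro rfl; exact hy L.map_zero)
    exact ⟨_, ⟨S, hS, rfl⟩, mem_map_of_mem hxS⟩

lemma comap_linearProjOfIsCompl {P : Submodule R M} {i : W →ₗ[R] M} (hi : Function.Injective i)
    (h : IsCompl (range i) P) (S : Submodule R W) :
    comap (linearProjOfIsCompl P i hi h) S = map i S ⊔ P := by
  have hleft : linearProjOfIsCompl P i hi h ∘ₗ i = LinearMap.id :=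
    LinearMap.ext (linearProjOfIsCompl_apply_left P i hi h)
  conv_lhs => rw [← map_id S, ← hleft, map_comp]
  rw [comap_map_eq, ker_linearProjOfIsCompl]

end Correspondence

section Finrank

variable {K V W : Type*} [DivisionRing K] [AddCommGroup V] [Module K V] [AddCommGroup W]
  [Module K W] [FiniteDimensional K V] {L : V →ₗ[K] W}

lemma finrank_map_add_finrank_ker_of_le {S : Submodule K V} (h : ker L ≤ S) :
    finrank K (S.map L) + finrank K (ker L) = finrank K S := by
  have := (L.domRestrict S).finrank_range_add_finrank_ker
  rwa [range_domRestrict, ker_domRestrict, (comapSubtypeEquivOfLe h).finrank_eq] at this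

lemma finrank_comap_of_surjective (hL : Function.Surjective L) (S : Submodule K W) :
    finrank K (S.comap L) = finrank K S + finrank K (ker L) := by
  rw [← finrank_map_add_finrank_ker_of_le (ker_le_comap L), map_comap_eq_of_surjective hL]

lemma exists_surjective_ker_eq [FiniteDimensional K W] (P : Submodule K V)
    (h : finrank K P + finrank K W = finrank K V) :
    ∃ L : V →ₗ[K] W, Function.Surjective L ∧ ker L = P := by
  let e : (V ⧸ P) ≃ₗ[K] W := LinearEquiv.ofFinrankEq _ _ (by
    have := P.finrank_quotient_add_finrank; omega)
  refine ⟨e.toLinearMap ∘ₗ P.mkQ, e.surjective.comp P.mkQ_surjective, ?_⟩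
  rw [ker_comp, e.ker, comap_bot, ker_mkQ]

end Finrank

lemma IsFlat.punctured_span {n t : ℕ} {f : Set (V n)} (hf : IsFlat n t f) :
    (span (ZMod 2) f).punctured = f := by
  obtain ⟨S, -, rfl⟩ := hf
  exact congrArg punctured (span_punctured S)

lemma IsFlat.finrank_span {n t : ℕ} {f : Set (V n)} (hf : IsFlat n t f) :
    finrank (ZMod 2) (span (ZMod 2) f) = t := by
  obtain ⟨S, hS, rfl⟩ := hf
  exact (span_punctured S).symm ▸ hS

lemma image_punctured_image_span {n t : ℕ} {Ω : Set (Set (V n))} (h : ∀ f ∈ Ω, IsFlat n t f) :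
    punctured '' (span (ZMod 2) '' Ω) = Ω := by
  rw [Set.image_image]
  exact Set.EqOn.image_eq_self fun f hf => (h f hf).punctured_span

lemma isSpread_image_punctured_iff {u h : ℕ} {𝒮 : Set (Submodule (ZMod 2) (V u))}
    (h𝒮 : ∀ S ∈ 𝒮, finrank (ZMod 2) S = h) :
    IsSpread u h (punctured '' 𝒮) ↔ IsSubspaceStar ⊥ 𝒮 := by
  have hflat : ∀ f ∈ punctured '' 𝒮, IsFlat u h f := by
    rintro _ ⟨S, hS, rfl⟩
    exact ⟨S, h𝒮 S hS, rfl⟩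
  simp only [IsSpread, Set.PairwiseDisjoint, Function.onFun, _root_.id, pairwise_image_punctured,
    disjoint_punctured, sUnion_image_punctured]
  exact ⟨fun ⟨_, hinf, hcov⟩ => ⟨fun _ _ => bot_le, hinf, hcov⟩,
    fun h => ⟨hflat, h.pairwise_inf_eq, h.exists_mem⟩⟩

lemma isCoveringStar_image_punctured_iff {n μ t t0 : ℕ} {𝒮 : Set (Submodule (ZMod 2) (V n))}
    {P : Submodule (ZMod 2) (V n)} (h𝒮 : ∀ S ∈ 𝒮, finrank (ZMod 2) S = t)
    (hP : finrank (ZMod 2) P = t0) :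
    IsCoveringStar n μ t t0 (punctured '' 𝒮) P.punctured ↔ 𝒮.ncard = μ ∧ IsSubspaceStar P 𝒮 := by
  simp only [IsCoveringStar, Set.ncard_image_of_injective _ punctured_injective,
    Set.forall_mem_image, punctured_subset_punctured, punctured_injective.ne_iff,
    punctured_inter_punctured, punctured_injective.eq_iff, sUnion_image_punctured]
  exact ⟨fun ⟨hμ, _, hle, hinf, hcov⟩ => ⟨hμ, fun S hS => (hle hS).2, hinf, hcov⟩,
    fun ⟨hμ, h⟩ => ⟨hμ, ⟨P, hP, rfl⟩, fun S hS => ⟨⟨S, h𝒮 S hS, rfl⟩, h.nucleus_le S hS⟩,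
      h.pairwise_inf_eq, h.exists_mem⟩⟩

lemma IsSpread.ncard_mul {u h : ℕ} {ψ : Set (Set (V u))} (hψ : IsSpread u h ψ) :
    ψ.ncard * (2 ^ h - 1) = 2 ^ u - 1 := by
  have hflat : ∀ f ∈ ψ, f.ncard = 2 ^ h - 1 := by
    rintro f hf
    obtain ⟨S, hS, rfl⟩ := hψ.1 f hf
    rw [← hS]
    exact (ncard_punctured S).trans (by rw [Nat.card_zmod])
  have hunion := (Set.toFinite ψ).ncard_biUnion (fun f _ => Set.toFinite f) hψ.2.1
  rw [← Set.sUnion_eq_biUnion, hψ.2.2, finsum_mem_congr rfl hflat,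
    finsum_mem_eq_finite_toFinset_sum _ (Set.toFinite ψ), Finset.sum_const, smul_eq_mul,
    ← Set.ncard_eq_toFinset_card, ← punctured_top (R := ZMod 2), ncard_punctured, finrank_top,
    finrank_fin_fun, Nat.card_zmod] at hunion
  exact hunion.symm

lemma IsSpread.ncard_eq {u h : ℕ} (hh : 0 < h) {ψ : Set (Set (V u))} (hψ : IsSpread u h ψ) :
    ψ.ncard = (2 ^ u - 1) / (2 ^ h - 1) :=
  (Nat.div_eq_of_eq_mul_left (by have := Nat.one_lt_two_pow hh.ne'; omega)
    hψ.ncard_mul.symm).symm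

lemma IsCoveringStar.exists_isSpread {n μ t t0 : ℕ} {Ω : Set (Set (V n))} {π : Set (V n)}
    (hst : IsCoveringStar n μ t t0 Ω π) :
    ∃ ψ : Set (Set (V (n - t0))), IsSpread (n - t0) (t - t0) ψ := by
  have hΩ : ∀ f ∈ Ω, IsFlat n t f := fun f hf => (hst.2.2.1 f hf).1
  have hπ : IsFlat n t0 π := hst.2.1
  obtain ⟨L, hL, hker⟩ := exists_surjective_ker_eq (W := V (n - t0)) (span (ZMod 2) π) (by
    have := (span (ZMod 2) π).finrank_le
    rw [hπ.finrank_span, finrank_fin_fun] at this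
    rw [hπ.finrank_span, finrank_fin_fun, finrank_fin_fun]
    omega)
  rw [← image_punctured_image_span hΩ, ← hπ.punctured_span,
    isCoveringStar_image_punctured_iff (Set.forall_mem_image.2 fun f hf => (hΩ f hf).finrank_span)
      hπ.finrank_span, ← hker] at hst
  refine ⟨_, (isSpread_image_punctured_iff ?_).2 (hst.2.map hL)⟩
  rintro _ ⟨S, hS, rfl⟩
  have hrank := finrank_map_add_finrank_ker_of_le (hst.2.nucleus_le S hS)
  obtain ⟨f, hf, rfl⟩ := hS
  rw [(hΩ f hf).finrank_span, hker, hπ.finrank_span] at hrank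
  omega

lemma IsSpread.isCoveringStar_comap {u n h : ℕ} (hu : 0 < u) {ψ : Set (Set (V u))}
    (hψ : IsSpread u h ψ) {L : V n →ₗ[ZMod 2] V u} (hL : Function.Surjective L) :
    IsCoveringStar n ψ.ncard (h + finrank (ZMod 2) (ker L)) (finrank (ZMod 2) (ker L))
      (punctured '' (comap L '' (span (ZMod 2) '' ψ))) (ker L).punctured := by
  have : Nonempty (Fin u) := ⟨⟨0, hu⟩⟩
  have h𝒮 : ∀ S ∈ span (ZMod 2) '' ψ, finrank (ZMod 2) S = h :=
    Set.forall_mem_image.2 fun f hf => (hψ.1 f hf).finrank_span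
  have hcard : (comap L '' (span (ZMod 2) '' ψ)).ncard = ψ.ncard := by
    rw [Set.ncard_image_of_injective _ (comap_injective_of_surjective hL),
      ← Set.ncard_image_of_injective _ punctured_injective, image_punctured_image_span hψ.1]
  rw [← image_punctured_image_span hψ.1, isSpread_image_punctured_iff h𝒮] at hψ
  refine (isCoveringStar_image_punctured_iff ?_ rfl).2 ⟨hcard, hψ.comap hL⟩
  rintro _ ⟨S, hS, rfl⟩
  rw [finrank_comap_of_surjective hL, h𝒮 S hS]

lemma emb_injective {u n : ℕ} (h : u ≤ n) : Function.Injective (emb u n) := fun x y hxy =>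
  funext fun i => by simpa [emb] using congrFun hxy ⟨i, i.2.trans_le h⟩

lemma finrank_range_emb {u n : ℕ} (h : u ≤ n) : finrank (ZMod 2) (range (emb u n)) = u := by
  rw [finrank_range_of_inj (emb_injective h), finrank_fin_fun]

lemma IsSpread.span_sUnion {u h : ℕ} {ψ : Set (Set (V u))} (hψ : IsSpread u h ψ) :
    span (ZMod 2) (⋃₀ ψ) = ⊤ := by
  rw [hψ.2.2, ← punctured_top (R := ZMod 2), span_punctured]

lemma IsSpread.isCoveringStar_span_image_emb_union {n t t0 : ℕ} (h0 : t0 < t) (h1 : t < n)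
    {ψ : Set (Set (V (n - t0)))} (hψ : IsSpread (n - t0) (t - t0) ψ) {π : Set (V n)}
    (hπ : IsFlat n t0 π)
    (hdisj : Disjoint (span (ZMod 2) (emb (n - t0) n '' ⋃₀ ψ)) (span (ZMod 2) π)) :
    IsCoveringStar n ((2 ^ (n - t0) - 1) / (2 ^ (t - t0) - 1)) t t0
      ((fun f => (span (ZMod 2) (emb (n - t0) n '' f ∪ π) : Set (V n)) \ {0}) '' ψ) π := by
  have hinj := emb_injective (Nat.sub_le n t0)
  have hcompl : IsCompl (range (emb (n - t0) n)) (span (ZMod 2) π) := by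
    rw [span_image, hψ.span_sUnion, Submodule.map_top] at hdisj
    refine (isCompl_iff_disjoint _ _ ?_).2 hdisj
    rw [finrank_range_emb (Nat.sub_le n t0), hπ.finrank_span, finrank_fin_fun]
    omega
  set L := linearProjOfIsCompl _ _ hinj hcompl
  have hL : Function.Surjective L := fun w =>
    ⟨_, linearProjOfIsCompl_apply_left _ _ hinj hcompl w⟩
  have hrays : (fun f => (span (ZMod 2) (emb (n - t0) n '' f ∪ π) : Set (V n)) \ {0}) '' ψ =
      punctured '' (comap L '' (span (ZMod 2) '' ψ)) := by
    rw [Set.image_image, Set.image_image]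
    refine Set.image_congr' fun f => congrArg punctured ?_
    rw [comap_linearProjOfIsCompl, span_union, span_image]
  have hstar := hψ.isCoveringStar_comap (by omega) hL
  rw [ker_linearProjOfIsCompl, hπ.finrank_span, hπ.punctured_span, Nat.sub_add_cancel h0.le,
    hψ.ncard_eq (by omega)] at hstar
  rwa [hrays]

/-- Lemma 1 (spread–star correspondence): a balanced covering star
`St(n, μ, t, t0)` of `PG(n-1,2)` exists iff a balanced `(h-1)`-spread of
`PG(u-1,2)` exists, where `u = n - t0`, `h = t - t0`.  Moreover, given such a
spread `ψ` embedded in `PG(n-1,2)` and a `(t0-1)`-flat `π` disjoint from the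
span of its flats, the sets `span(f ∪ π) \ {0}` for `f ∈ ψ` form a covering
star with nucleus `π`. -/
theorem star_spread_correspondence (n t t0 μ : ℕ) (h0 : t0 < t) (h1 : t < n)
    (hμ : μ = (2 ^ (n - t0) - 1) / (2 ^ (t - t0) - 1)) :
    ((∃ (Ω : Set (Set (V n))) (π : Set (V n)), IsCoveringStar n μ t t0 Ω π) ↔
      ∃ ψ : Set (Set (V (n - t0))), IsSpread (n - t0) (t - t0) ψ) ∧
    (∀ (ψ : Set (Set (V (n - t0)))), IsSpread (n - t0) (t - t0) ψ →
      ∀ π : Set (V n), IsFlat n t0 π →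
        Disjoint (Submodule.span (ZMod 2) (emb (n - t0) n '' ⋃₀ ψ))
          (Submodule.span (ZMod 2) π) →
        IsCoveringStar n μ t t0
          ((fun f => (Submodule.span (ZMod 2) (emb (n - t0) n '' f ∪ π) :
              Set (V n)) \ {0}) '' ψ) π) := by
  subst hμ
  refine ⟨⟨fun ⟨Ω, π, hst⟩ => hst.exists_isSpread, fun ⟨ψ, hψ⟩ => ?_⟩,
    fun ψ hψ π hπ hdisj => hψ.isCoveringStar_span_image_emb_union h0 h1 hπ hdisj⟩
  obtain ⟨Q, hQ⟩ := (range (emb (n - t0) n)).exists_isCompl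
  have hQrank : finrank (ZMod 2) Q = t0 := by
    have := finrank_add_eq_of_isCompl hQ
    rw [finrank_range_emb (Nat.sub_le n t0), finrank_fin_fun] at this
    omega
  refine ⟨_, _, hψ.isCoveringStar_span_image_emb_union h0 h1 (π := Q.punctured)
    ⟨Q, hQrank, rfl⟩ ?_⟩
  rw [span_image, hψ.span_sUnion, Submodule.map_top, span_punctured]
  exact hQ.disjoint
end
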